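/- arXiv:2311.04486 — 2 statements merged into one kernel-verified Lean document; each statement's English description precedes it below -/
import Mathlib

section
/- Let $G$ be a finite group, $F = F(G)$ its Fitting subgroup, and let $x \in G$ have prime order $p$ such that $N_G(\langle x \rangle) F$ is a Frobenius group with Frobenius kernel $F$ and complement $N_G(\langle x \rangle)$. Then the natural map $\theta : N_G(\langle x \rangle) \to N_{G/F}(\langle xF \rangle)$, $g \mapsto gF$, is surjective, and $\theta(C_G(x)) = C_{G/F}(xF)$. In particular $N_G(\langle x \rangle)/C_G(x) \cong N_{G/F}(\langle xF \rangle)/C_{G/F}(xF)$. -/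
/-!
Write `N = N_G(⟨x⟩)` and `π : G → G/F`. Since every `n ≠ 1` in `N` acts on `F` by conjugation
without fixed points, `e ↦ e (n e n⁻¹)⁻¹` is a bijection of `F`, so every element of the coset
`nF` is `F`-conjugate to `n`. If `π g` normalizes `⟨π x⟩`, then `g x g⁻¹ ∈ uF` for some `u ∈ ⟨x⟩`;
conjugating by a suitable `e ∈ F` moves `g x g⁻¹` to `u`, so `e⁻¹ g ∈ N` lifts `π g`. If moreover
`π g` centralizes `π x`, the commutator of the lift with `x` lies in `N ∩ F = 1`.
-/

open scoped commutatorElement in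
/-- The iterated Engel commutator: `engel x y 0 = x`, `engel x y (n+1) = ⁅engel x y n, y⁆`. -/
def engel {G : Type*} [Group G] (x y : G) : ℕ → G
  | 0 => x
  | n + 1 => ⁅engel x y n, y⁆

section

open Subgroup

variable {G : Type*} [Group G]

theorem Subgroup.exists_conj_eq_mul_of_forall_commute_eq_one {F : Subgroup G} [F.Normal]
    [Finite F] {n : G} (hn : ∀ f ∈ F, Commute n f → f = 1) {f : G} (hf : f ∈ F) :
    ∃ e ∈ F, e * n * e⁻¹ = n * f := by
  have hfree : MonoidHom.FixedPointFree (MulAut.conjNormal (H := F) n) := fun e he ↦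
    Subtype.ext <| hn e e.2 <| mul_inv_eq_iff_eq_mul.mp <| congrArg Subtype.val he
  obtain ⟨e, he⟩ := hfree.commutatorMap_surjective ⟨n * f * n⁻¹, ‹F.Normal›.conj_mem f hf n⟩
  have he' : (e : G) * (n * e * n⁻¹)⁻¹ = n * f * n⁻¹ := by
    simpa [div_eq_mul_inv, MulAut.conjNormal_apply] using congrArg Subtype.val he
  refine ⟨e, e.2, ?_⟩
  calc (e : G) * n * (e : G)⁻¹ = (e * (n * e * n⁻¹)⁻¹) * n := by group
    _ = n * f := by rw [he']; group

theorem Subgroup.mem_normalizer_zpowers_of_conj_mem [Finite G] {x g : G}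
    (h : g * x * g⁻¹ ∈ zpowers x) : g ∈ normalizer (zpowers x : Set G) := by
  rw [mem_normalizer_iff_map_conj_eq]
  refine eq_of_le_of_card_ge ?_ (card_map_of_injective (MulAut.conj g).injective).ge
  rwa [MonoidHom.map_zpowers, zpowers_le]

namespace QuotientGroup

variable [Finite G] {F : Subgroup G} [F.Normal] {x : G}

theorem map_mk'_normalizer_zpowers_eq (hdisj : normalizer (zpowers x : Set G) ⊓ F = ⊥)
    (hfrob : ∀ l ∈ normalizer (zpowers x : Set G), l ≠ 1 → ∀ f ∈ F, Commute l f → f = 1) :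
    Subgroup.map (mk' F) (normalizer (zpowers x : Set G)) =
      normalizer (zpowers (mk' F x) : Set (G ⧸ F)) := by
  refine le_antisymm ((le_normalizer_map _).trans_eq (by rw [MonoidHom.map_zpowers])) ?_
  intro c hc
  obtain ⟨g, rfl⟩ := mk'_surjective F c
  have hconj : mk' F (g * x * g⁻¹) ∈ Subgroup.map (mk' F) (zpowers x) := by
    rw [MonoidHom.map_zpowers]
    simpa using (mem_normalizer_iff.mp hc (mk' F x)).mp (mem_zpowers _)
  obtain ⟨u, hu, hug⟩ := hconj
  have hf : u⁻¹ * (g * x * g⁻¹) ∈ F := (QuotientGroup.eq (s := F)).mp hug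
  by_cases hu1 : u = 1
  · have hxF : x ∈ F := by
      rw [hu1, inv_one, one_mul] at hf
      simpa [mul_assoc] using ‹F.Normal›.conj_mem _ hf g⁻¹
    have hx1 : x = 1 := mem_bot.mp (hdisj ▸ ⟨le_normalizer (mem_zpowers x), hxF⟩)
    exact ⟨g, mem_normalizer_zpowers_of_conj_mem (by simp [hx1]), rfl⟩
  obtain ⟨e, heF, he⟩ :=
    exists_conj_eq_mul_of_forall_commute_eq_one (hfrob u (le_normalizer hu) hu1) hf
  rw [mul_inv_cancel_left] at he
  have hlift : e⁻¹ * g * x * (e⁻¹ * g)⁻¹ = u := by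
    calc e⁻¹ * g * x * (e⁻¹ * g)⁻¹ = e⁻¹ * (g * x * g⁻¹) * e := by group
      _ = u := by rw [← he]; group
  refine ⟨e⁻¹ * g, mem_normalizer_zpowers_of_conj_mem (hlift ▸ hu), ?_⟩
  simp [(eq_one_iff e).mpr heF]

theorem map_mk'_centralizer_singleton_eq (hdisj : normalizer (zpowers x : Set G) ⊓ F = ⊥)
    (hnorm : normalizer (zpowers (mk' F x) : Set (G ⧸ F)) ≤
      Subgroup.map (mk' F) (normalizer (zpowers x : Set G))) :
    Subgroup.map (mk' F) (centralizer {x}) = centralizer {mk' F x} := by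
  refine le_antisymm ((map_centralizer_le_centralizer_image _ _).trans_eq (by simp)) ?_
  intro c hc
  have hcx : c * mk' F x = mk' F x * c := mem_centralizer_singleton_iff.mp hc
  obtain ⟨h, hN, rfl⟩ := mem_map.mp <| hnorm <| mem_normalizer_zpowers_of_conj_mem <| by
    rw [hcx, mul_inv_cancel_right]
    exact mem_zpowers _
  refine ⟨h, mem_centralizer_singleton_iff.mpr ?_, rfl⟩
  have hxN : x ∈ normalizer (zpowers x : Set G) := le_normalizer (mem_zpowers x)
  have hcommN : h * x * h⁻¹ * x⁻¹ ∈ normalizer (zpowers x : Set G) :=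
    mul_mem (mul_mem (mul_mem hN hxN) (inv_mem hN)) (inv_mem hxN)
  have hcommF : h * x * h⁻¹ * x⁻¹ ∈ F := by
    refine (eq_one_iff _).mp ?_
    rw [← mk'_apply, map_mul, map_mul, map_mul, map_inv, map_inv, hcx]
    group
  have hcomm := hdisj ▸ mem_inf.mpr ⟨hcommN, hcommF⟩
  rwa [mem_bot, mul_inv_eq_one, mul_inv_eq_iff_eq_mul] at hcomm

end QuotientGroup

end

theorem stmt8_general {G : Type*} [Group G] [Finite G] (F : Subgroup G) [F.Normal]
    (x : G)
    (hdisj : Subgroup.normalizer (Subgroup.zpowers x : Set G) ⊓ F = ⊥)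
    (hfrob : ∀ l ∈ Subgroup.normalizer (Subgroup.zpowers x : Set G), l ≠ 1 →
      ∀ f ∈ F, Commute l f → f = 1) :
    Subgroup.map (QuotientGroup.mk' F) (Subgroup.normalizer (Subgroup.zpowers x : Set G))
        = Subgroup.normalizer (Subgroup.zpowers ((QuotientGroup.mk' F) x) : Set (G ⧸ F)) ∧
      Subgroup.map (QuotientGroup.mk' F) (Subgroup.centralizer {x})
        = Subgroup.centralizer {(QuotientGroup.mk' F) x} := by
  have hnorm := QuotientGroup.map_mk'_normalizer_zpowers_eq hdisj hfrob
  exact ⟨hnorm, QuotientGroup.map_mk'_centralizer_singleton_eq hdisj hnorm.ge⟩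

theorem stmt8 {G : Type*} [Group G] [Finite G] (F : Subgroup G) [F.Normal]
    (hFnil : Group.IsNilpotent F)
    (hFmax : ∀ K : Subgroup G, K.Normal → Group.IsNilpotent K → K ≤ F)
    (x : G) (p : ℕ) (hp : p.Prime) (hx : orderOf x = p)
    (hdisj : Subgroup.normalizer (Subgroup.zpowers x : Set G) ⊓ F = ⊥)
    (hfrob : ∀ l ∈ Subgroup.normalizer (Subgroup.zpowers x : Set G), l ≠ 1 →
      ∀ f ∈ F, Commute l f → f = 1) :
    Subgroup.map (QuotientGroup.mk' F) (Subgroup.normalizer (Subgroup.zpowers x : Set G))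
        = Subgroup.normalizer (Subgroup.zpowers ((QuotientGroup.mk' F) x) : Set (G ⧸ F)) ∧
      Subgroup.map (QuotientGroup.mk' F) (Subgroup.centralizer {x})
        = Subgroup.centralizer {(QuotientGroup.mk' F) x} :=
  stmt8_general F x hdisj hfrob
end

section
/- Let $p \equiv 3 \pmod{4}$ be prime, let $n \in \{p, p+1\}$ with $n \ge 5$, and let $P$ be a Sylow $p$-subgroup of $\mathrm{Alt}(n)$. Then $P$ is generated by a single $p$-cycle, $|N_{\mathrm{Alt}(n)}(P)| = p(p-1)(n-p)!/2$, $C_{\mathrm{Alt}(n)}(P) = P$ when $n \le p+1$, and $|N_{\mathrm{Alt}(n)}(P) : C_{\mathrm{Alt}(n)}(P)| = (p-1)/2$ is odd. -/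
/-!
Since `p ≤ n < 2p` and `p` is odd, `p` divides `|Alt(n)| = n!/2` exactly once, so a Sylow
`p`-subgroup `P` has order `p` and is generated by any of its nontrivial elements; an element of
order `p` of `Sym(n)` is a `p`-cycle, and all `p`-cycles are even. Distinct Sylow subgroups meet
trivially, so `#Syl_p · (p - 1)` is the number `(p - 1)! · C(n, p)` of `p`-cycles, and
`#Syl_p = |Alt(n) : N(P)|` yields `2 |N(P)| = p (p - 1) (n - p)!`. For `n ≤ p + 1` the centralizer
of a `p`-cycle in `Sym(n)` has order `(n - p)! · p = p`, so it is generated by the cycle, and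
hence `C(P) = P` in `Alt(n)`.
-/

open Equiv Equiv.Perm Subgroup Finset Nat

section PrimeOrderSylow

variable {G : Type*} [Group G] [Finite G] {p : ℕ} [Fact p.Prime]

theorem Sylow.card_eq_of_factorization_eq_one (hG : (Nat.card G).factorization p = 1)
    (Q : Sylow p G) : Nat.card Q = p := by
  rw [Q.card_eq_multiplicity, hG, pow_one]

theorem Sylow.coe_eq_zpowers_of_mem (hG : (Nat.card G).factorization p = 1) (Q : Sylow p G)
    {g : G} (hgQ : g ∈ Q) (hg : g ≠ 1) : (Q : Subgroup G) = zpowers g := by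
  have hdvd : orderOf g ∣ p := by
    rw [← Q.card_eq_of_factorization_eq_one hG, ← Subgroup.orderOf_mk g hgQ]
    exact orderOf_dvd_natCard _
  have hord : orderOf g = p :=
    ((Fact.out : p.Prime).eq_one_or_self_of_dvd _ hdvd).resolve_left (by simpa using hg)
  refine (eq_of_le_of_card_ge (zpowers_le.mpr hgQ) ?_).symm
  rw [Nat.card_zpowers, hord, Q.card_eq_of_factorization_eq_one hG]

theorem Sylow.exists_coe_eq_zpowers (hG : (Nat.card G).factorization p = 1) (Q : Sylow p G) :
    ∃ g : G, orderOf g = p ∧ (Q : Subgroup G) = zpowers g := by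
  have : Nontrivial Q := Finite.one_lt_card_iff_nontrivial.mp <| by
    rw [Q.card_eq_of_factorization_eq_one hG]; exact (Fact.out : p.Prime).one_lt
  obtain ⟨g, hg⟩ := exists_ne (1 : Q)
  have hQ := Q.coe_eq_zpowers_of_mem hG g.2 (by simpa using hg)
  refine ⟨g, ?_, hQ⟩
  rw [← Nat.card_zpowers, ← hQ, Q.card_eq_of_factorization_eq_one hG]

theorem card_orderOf_eq_prime_eq_card_sylow_mul (hG : (Nat.card G).factorization p = 1) :
    Nat.card {g : G // orderOf g = p} = Nat.card (Sylow p G) * (p - 1) := by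
  classical
  have : Fintype (Sylow p G) := Fintype.ofFinite _
  have horder (Q : Sylow p G) (g : ((Q : Set G) \ {1} : Set G)) : orderOf (g : G) = p := by
    rw [← Nat.card_zpowers, ← Q.coe_eq_zpowers_of_mem hG g.2.1 g.2.2,
      Q.card_eq_of_factorization_eq_one hG]
  let f : (Σ Q : Sylow p G, ((Q : Set G) \ {1} : Set G)) → {g : G // orderOf g = p} :=
    fun x => ⟨x.2, horder x.1 x.2⟩
  have hf : Function.Bijective f := by
    refine ⟨fun x y hxy => ?_, fun g => ?_⟩
    · have hxy : (x.2 : G) = y.2 := congrArg Subtype.val hxy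
      refine Sigma.subtype_ext (Sylow.ext ?_) hxy
      rw [x.1.coe_eq_zpowers_of_mem hG x.2.2.1 x.2.2.2,
        y.1.coe_eq_zpowers_of_mem hG y.2.2.1 y.2.2.2, hxy]
    · have hg1 : (g : G) ≠ 1 := by
        intro h
        exact (Fact.out : p.Prime).one_lt.ne (by rw [← g.2, h, orderOf_one])
      obtain ⟨Q, hQ⟩ := IsPGroup.exists_le_sylow
        (P := zpowers (g : G)) (.of_card (n := 1) (by rw [Nat.card_zpowers, g.2, pow_one]))
      exact ⟨⟨Q, g, zpowers_le.mp hQ, hg1⟩, rfl⟩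
  rw [← Nat.card_eq_of_bijective f hf, Nat.card_sigma, Finset.sum_const_nat fun Q _ => ?_,
    Finset.card_univ, Nat.card_eq_fintype_card]
  rw [Nat.card_coe_set_eq, Set.ncard_sdiff_singleton_of_mem (one_mem _), ← Nat.card_coe_set_eq]
  exact congrArg (· - 1) (Q.card_eq_of_factorization_eq_one hG)

end PrimeOrderSylow

theorem Subgroup.card_mul_relIndex {G : Type*} [Group G] {H K : Subgroup G} (h : H ≤ K) :
    Nat.card H * H.relIndex K = Nat.card K := by
  rw [← relIndex_bot_left, ← relIndex_bot_left, relIndex_mul_relIndex _ _ _ bot_le h]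

theorem Subgroup.centralizer_zpowers_eq_of_centralizer_coe_eq {G : Type*} [Group G]
    {H : Subgroup G} {x : H} (hx : centralizer {(x : G)} = zpowers (x : G)) :
    centralizer (zpowers x : Set H) = zpowers x := by
  ext y
  rw [zpowers_eq_closure, centralizer_closure, mem_centralizer_singleton_iff,
    ← zpowers_eq_closure, ← mem_map_iff_mem H.subtype_injective, MonoidHom.map_zpowers,
    subtype_apply, ← hx, mem_centralizer_singleton_iff]
  exact Subtype.ext_iff

theorem Nat.factorization_factorial_eq_one {p n : ℕ} (hp : p.Prime) (hpn : p ≤ n)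
    (hn : n < 2 * p) :
    (n !).factorization p = 1 := by
  have hlog : log p n < 2 := by
    rw [Nat.log_lt_iff_lt_pow hp.one_lt (by omega)]
    nlinarith [hp.two_le]
  rw [factorization_factorial hp hlog, Finset.sum_Ico_succ_top le_rfl, Finset.Ico_self,
    Finset.sum_empty, zero_add, pow_one]
  exact Nat.div_eq_of_lt_le (by simpa using hpn) (by omega)

section Perm

variable {α : Type*} [Fintype α] [DecidableEq α] {p : ℕ}

theorem Equiv.Perm.cycleType_eq_singleton_iff_orderOf_eq (hp : p.Prime)
    (hα : Fintype.card α < 2 * p) {σ : Perm α} : σ.cycleType = {p} ↔ orderOf σ = p := by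
  refine ⟨fun h => ?_, fun h => ?_⟩
  · rw [← lcm_cycleType, h, Multiset.lcm_singleton, normalize_eq]
  have hσ : σ.IsCycle := isCycle_of_prime_order' (h ▸ hp) (h ▸ hα)
  rw [hσ.cycleType, ← hσ.orderOf, h]

theorem Equiv.Perm.IsCycle.centralizer_eq_zpowers {σ : Perm α} (hσ : σ.IsCycle)
    (hα : Fintype.card α ≤ #σ.support + 1) : centralizer {σ} = zpowers σ := by
  refine (eq_of_le_of_card_ge (zpowers_le.mpr (mem_centralizer_singleton_iff.mpr rfl)) ?_).symm
  rw [nat_card_centralizer, hσ.cycleType, Multiset.sum_singleton, Multiset.prod_singleton,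
    Nat.card_zpowers, hσ.orderOf, factorial_eq_one.mpr (by omega)]
  simp

theorem card_alternatingGroup_orderOf_eq_prime (hp : p.Prime) (hp2 : p ≠ 2)
    (hα : Fintype.card α < 2 * p) :
    Nat.card {g : alternatingGroup α // orderOf g = p} = #{σ : Perm α | σ.cycleType = {p}} := by
  have hsign {σ : Perm α} (hσ : σ.cycleType = {p}) : σ ∈ alternatingGroup α := by
    rw [mem_alternatingGroup, sign_of_cycleType, hσ, Multiset.sum_singleton,
      Multiset.card_singleton, (hp.odd_of_ne_two hp2).add_one.neg_one_pow]
  rw [← Fintype.card_subtype, ← Nat.card_eq_fintype_card]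
  refine Nat.card_congr
    { toFun g := ⟨g.1, (cycleType_eq_singleton_iff_orderOf_eq hp hα).mpr (by simpa using g.2)⟩
      invFun σ := ⟨⟨σ, hsign σ.2⟩, by
        simpa using (cycleType_eq_singleton_iff_orderOf_eq hp hα).mp σ.2⟩
      left_inv _ := rfl
      right_inv _ := rfl }

theorem factorization_card_alternatingGroup_eq_one (hp : p.Prime) (hp2 : p ≠ 2)
    (hpα : p ≤ Fintype.card α) (hα : Fintype.card α < 2 * p) :
    (Nat.card (alternatingGroup α)).factorization p = 1 := by
  have : Nontrivial α := Fintype.one_lt_card_iff_nontrivial.mp (by have := hp.two_le; omega)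
  have h2 : (2 : ℕ).factorization p = 0 :=
    factorization_eq_zero_of_not_dvd fun h => hp2 ((prime_dvd_prime_iff_eq hp prime_two).mp h)
  have hmul := congrArg (fun m => m.factorization p) (two_mul_card_alternatingGroup (α := α))
  simp only [Fintype.card_perm, Nat.factorization_mul two_ne_zero Fintype.card_ne_zero] at hmul
  rw [Nat.card_eq_fintype_card, ← factorization_factorial_eq_one hp hpα hα]
  simpa [h2] using hmul

theorem two_mul_card_normalizer_sylow_alternatingGroup (hp : p.Prime) (hp2 : p ≠ 2)
    (hpα : p ≤ Fintype.card α) (hα : Fintype.card α < 2 * p)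
    (P : Sylow p (alternatingGroup α)) :
    2 * Nat.card (normalizer ((P : Subgroup (alternatingGroup α)) : Set (alternatingGroup α))) =
      p * (p - 1) * (Fintype.card α - p)! := by
  have : Fact p.Prime := ⟨hp⟩
  have : Nontrivial α := Fintype.one_lt_card_iff_nontrivial.mp (by have := hp.two_le; omega)
  set N := normalizer ((P : Subgroup (alternatingGroup α)) : Set (alternatingGroup α))
  have hSylow : N.index * (p - 1) = (p - 1)! * (Fintype.card α).choose p := by
    rw [show N.index = Nat.card (Sylow p (alternatingGroup α)) from
        P.card_eq_index_normalizer.symm,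
      ← card_orderOf_eq_prime_eq_card_sylow_mul
        (factorization_card_alternatingGroup_eq_one hp hp2 hpα hα),
      card_alternatingGroup_orderOf_eq_prime hp hp2 hα,
      card_of_cycleType_singleton hp.two_le hpα]
  have hfac : (Fintype.card α)! =
      (p - 1)! * (Fintype.card α).choose p * (p * (Fintype.card α - p)!) := by
    rw [← choose_mul_factorial_mul_factorial hpα, ← mul_factorial_pred hp.ne_zero]; ring
  have hpos : 0 < N.index * (p - 1) :=
    Nat.mul_pos (Nat.pos_of_ne_zero index_ne_zero_of_finite) (by have := hp.two_le; omega)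
  refine Nat.eq_of_mul_eq_mul_left hpos ?_
  calc N.index * (p - 1) * (2 * Nat.card N) = (p - 1) * (2 * (Nat.card N * N.index)) := by ring
    _ = (p - 1) * (Fintype.card α)! := by
      rw [card_mul_index, Nat.card_eq_fintype_card, two_mul_card_alternatingGroup,
        Fintype.card_perm]
    _ = N.index * (p - 1) * (p * (p - 1) * (Fintype.card α - p)!) := by rw [hfac, ← hSylow]; ring

end Perm

theorem stmt10_general (p n : ℕ) (hp : p.Prime) (hmod : p % 4 = 3)
    (hn : n = p ∨ n = p + 1)
    (P : Sylow p (alternatingGroup (Fin n))) :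
    (∃ x : alternatingGroup (Fin n), (x : Equiv.Perm (Fin n)).IsCycle ∧
        (x : Equiv.Perm (Fin n)).support.card = p ∧
        (P : Subgroup (alternatingGroup (Fin n))) = Subgroup.zpowers x) ∧
      Nat.card (Subgroup.normalizer ((P : Subgroup (alternatingGroup (Fin n))) : Set (alternatingGroup (Fin n))))
        = p * (p - 1) * (n - p).factorial / 2 ∧
      Subgroup.centralizer ((P : Subgroup (alternatingGroup (Fin n))) : Set _)
        = (P : Subgroup (alternatingGroup (Fin n))) ∧
      (Subgroup.centralizer ((P : Subgroup (alternatingGroup (Fin n))) : Set _)).relIndex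
          (Subgroup.normalizer ((P : Subgroup (alternatingGroup (Fin n))) : Set (alternatingGroup (Fin n)))) = (p - 1) / 2 ∧
      Odd ((p - 1) / 2) := by
  have : Fact p.Prime := ⟨hp⟩
  have hp2 : p ≠ 2 := by omega
  have hpn : p ≤ Fintype.card (Fin n) := by rw [Fintype.card_fin]; omega
  have hn2p : Fintype.card (Fin n) < 2 * p := by rw [Fintype.card_fin]; have := hp.two_le; omega
  have hG := factorization_card_alternatingGroup_eq_one hp hp2 hpn hn2p
  obtain ⟨x, hx, hPx⟩ := P.exists_coe_eq_zpowers hG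
  have hxp : (x : Perm (Fin n)).cycleType = {p} :=
    (cycleType_eq_singleton_iff_orderOf_eq hp hn2p).mpr (by rwa [orderOf_coe])
  have hcyc : (x : Perm (Fin n)).IsCycle := card_cycleType_eq_one.mp (by rw [hxp]; rfl)
  have hsupp : #(x : Perm (Fin n)).support = p := by
    rw [← sum_cycleType, hxp, Multiset.sum_singleton]
  have hC : centralizer ((P : Subgroup (alternatingGroup (Fin n))) : Set _) =
      (P : Subgroup (alternatingGroup (Fin n))) := by
    rw [hPx]
    exact centralizer_zpowers_eq_of_centralizer_coe_eq
      (hcyc.centralizer_eq_zpowers (by rw [hsupp, Fintype.card_fin]; omega))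
  have hfac : (n - p)! = 1 := factorial_eq_one.mpr (by omega)
  have hN := two_mul_card_normalizer_sylow_alternatingGroup hp hp2 hpn hn2p P
  rw [Fintype.card_fin, hfac, mul_one] at hN
  have hCN := card_mul_relIndex (hC.le.trans le_normalizer)
  rw [hC, P.card_eq_of_factorization_eq_one hG] at hCN
  have hrel : 2 * (P : Subgroup (alternatingGroup (Fin n))).relIndex
      (normalizer ((P : Subgroup (alternatingGroup (Fin n))) : Set _)) = p - 1 :=
    Nat.eq_of_mul_eq_mul_left hp.pos (by rw [mul_left_comm, hCN, hN])
  refine ⟨⟨x, hcyc, hsupp, hPx⟩, ?_, hC, ?_, Nat.odd_iff.mpr (by omega)⟩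
  · rw [hfac, mul_one, ← hN, Nat.mul_div_cancel_left _ two_pos]
  · rw [hC]; omega

theorem stmt10 (p n : ℕ) (hp : p.Prime) (hmod : p % 4 = 3)
    (hn : n = p ∨ n = p + 1) (h5 : 5 ≤ n)
    (P : Sylow p (alternatingGroup (Fin n))) :
    (∃ x : alternatingGroup (Fin n), (x : Equiv.Perm (Fin n)).IsCycle ∧
        (x : Equiv.Perm (Fin n)).support.card = p ∧
        (P : Subgroup (alternatingGroup (Fin n))) = Subgroup.zpowers x) ∧
      Nat.card (Subgroup.normalizer ((P : Subgroup (alternatingGroup (Fin n))) : Set (alternatingGroup (Fin n))))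
        = p * (p - 1) * (n - p).factorial / 2 ∧
      Subgroup.centralizer ((P : Subgroup (alternatingGroup (Fin n))) : Set _)
        = (P : Subgroup (alternatingGroup (Fin n))) ∧
      (Subgroup.centralizer ((P : Subgroup (alternatingGroup (Fin n))) : Set _)).relIndex
          (Subgroup.normalizer ((P : Subgroup (alternatingGroup (Fin n))) : Set (alternatingGroup (Fin n)))) = (p - 1) / 2 ∧
      Odd ((p - 1) / 2) :=
  stmt10_general p n hp hmod hn P
end
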